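/- arXiv:2408.07156 — 2 statements merged into one kernel-verified Lean document; each statement's English description precedes it below -/
import Mathlib

section
/- Let {vᵢ}_{i∈I} be an orthonormal basis of V indexed by a linearly ordered set I, and for a finite subset S = {i₁ < ⋯ < i_r} ⊆ I write v_S = v_{i₁}⋯v_{i_r}. If a finite linear combination ∑_S α_S ad(v_S) of inner derivations (with S ranging over finite nonempty subsets of even cardinality) is the zero derivation of Cℓ(V,f), then all coefficients α_S are zero. -/
/-! For an orthogonal basis, the isomorphism `CliffordAlgebra f ≃ₗ ExteriorAlgebra F V`
(available when `2` is invertible) sends each ordered product `v_S` to the corresponding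
wedge product, so the `v_S` inherit linear independence from the standard basis of the exterior
algebra. Since `v_i` commutes with `v_i` and anticommutes with the other `v_j`, for `|S|` even we
get `ad(v_S)(v_i) = 2 v_S v_i` when `i ∈ S` and `0` otherwise. Applying the vanishing combination
to `v_i` for some `i ∈ S₀` and multiplying on the right by `v_i` (with `v_i² = 1`) leaves
`∑_{S ∋ i} 2 α_S v_S = 0`. -/

/-- The ordered product `v_S = v_{i₁} ⋯ v_{i_r}` in the Clifford algebra,
for `S = {i₁ < ⋯ < i_r}`. -/
def cliffordFinsetProd {F V I : Type*} [Field F] [AddCommGroup V] [Module F V]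
    [LinearOrder I] (f : QuadraticForm F V) (v : I → V) (S : Finset I) :
    CliffordAlgebra f :=
  ((S.sort (· ≤ ·)).map fun i => CliffordAlgebra.ι f (v i)).prod

open CliffordAlgebra

theorem Finset.countP_sort {I : Type*} [LinearOrder I] (S : Finset I) (p : I → Prop)
    [DecidablePred p] : (S.sort (· ≤ ·)).countP p = (S.filter p).card := by
  rw [← (S.sort_nodup _).card_eq_countP, Finset.sort_toFinset]

theorem Module.Basis.exteriorAlgebra_apply_eq_prod_sort {R M I : Type*} [CommRing R]
    [AddCommGroup M] [Module R M] [LinearOrder I] (b : Module.Basis I R M) (s : Finset I) :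
    b.ExteriorAlgebra s = ((s.sort (· ≤ ·)).map fun i => ExteriorAlgebra.ι R (b i)).prod := by
  rw [ExteriorAlgebra.basis_apply_ofCard b rfl, ExteriorAlgebra.ιMulti_family,
    ExteriorAlgebra.ιMulti_apply, List.ofFn_eq_map, ← s.listMap_orderEmbOfFin_finRange rfl,
    List.map_map]
  rfl

namespace CliffordAlgebra

variable {R M : Type*} [CommRing R] [AddCommGroup M] [Module R M] {Q Q' : QuadraticForm R M}

theorem contractLeft_list_prod_eq_zero (d : Module.Dual R M) (ms : List M)
    (hd : ∀ m ∈ ms, d m = 0) : contractLeft d (ms.map (ι Q)).prod = 0 := by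
  induction ms with
  | nil => simp
  | cons m ms ih =>
    rw [List.map_cons, List.prod_cons, contractLeft_ι_mul, hd m List.mem_cons_self, zero_smul,
      ih fun m' hm' => hd m' (List.mem_cons_of_mem m hm'), mul_zero, sub_zero]

theorem changeForm_list_prod {B : LinearMap.BilinForm R M} (h : B.toQuadraticMap = Q' - Q)
    (ms : List M) (hms : ms.Pairwise fun m m' => B m m' = 0) :
    changeForm h (ms.map (ι Q)).prod = (ms.map (ι Q')).prod := by
  induction ms with
  | nil => simp
  | cons m ms ih =>
    obtain ⟨hm, hms⟩ := List.pairwise_cons.mp hms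
    rw [List.map_cons, List.prod_cons, List.map_cons, List.prod_cons, changeForm_ι_mul, ih hms,
      contractLeft_list_prod_eq_zero _ _ hm, sub_zero]

theorem ι_mul_list_prod_of_pairwise_isOrtho {I : Type*} [DecidableEq I] {v : I → M}
    (hv : Pairwise fun i j => Q.IsOrtho (v i) (v j)) (i : I) (L : List I) :
    ι Q (v i) * (L.map fun j => ι Q (v j)).prod =
      (-1 : R) ^ L.countP (· ≠ i) • ((L.map fun j => ι Q (v j)).prod * ι Q (v i)) := by
  induction L with
  | nil => simp
  | cons j L ih =>
    rw [List.map_cons, List.prod_cons, ← mul_assoc]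
    by_cases hji : j = i
    · subst hji
      rw [List.countP_cons_of_neg (by simp), ι_sq_scalar, ih, smul_mul_assoc, smul_smul,
        ← pow_add, Even.neg_one_pow ⟨_, rfl⟩, one_smul, mul_assoc, ι_sq_scalar,
        Algebra.commutes]
    · rw [ι_mul_ι_comm_of_isOrtho (hv (Ne.symm hji)), neg_mul, mul_assoc, ih, mul_smul_comm,
        ← mul_assoc, List.countP_cons_of_pos (by simpa using hji), pow_succ, mul_neg_one,
        neg_smul]

end CliffordAlgebra

section OrthogonalBasis

variable {F V I : Type*} [Field F] [AddCommGroup V] [Module F V] [LinearOrder I]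
  {f : QuadraticForm F V}

theorem equivExterior_cliffordFinsetProd [Invertible (2 : F)] {v : I → V}
    (hv : Pairwise fun i j => f.IsOrtho (v i) (v j)) (S : Finset I) :
    equivExterior f (cliffordFinsetProd f v S) =
      ((S.sort (· ≤ ·)).map fun i => ExteriorAlgebra.ι F (v i)).prod := by
  have hsorted : ((S.sort (· ≤ ·)).map v).Pairwise
      fun m m' => QuadraticMap.associated (-f) m m' = 0 :=
    List.Pairwise.map v (fun i j hij => by simpa using hv hij.ne) S.sortedLT_sort.pairwise
  simpa [cliffordFinsetProd, List.map_map, Function.comp_def] using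
    changeForm_list_prod changeForm.associated_neg_proof _ hsorted

theorem linearIndependent_cliffordFinsetProd [Invertible (2 : F)] (v : Module.Basis I F V)
    (hv : Pairwise fun i j => f.IsOrtho (v i) (v j)) :
    LinearIndependent F (cliffordFinsetProd f v) := by
  have hbasis : cliffordFinsetProd f v = v.ExteriorAlgebra.map (equivExterior f).symm := by
    ext S
    rw [Module.Basis.map_apply, LinearEquiv.eq_symm_apply, equivExterior_cliffordFinsetProd hv,
      v.exteriorAlgebra_apply_eq_prod_sort]
  rw [hbasis]
  exact Module.Basis.linearIndependent _

variable {v : I → V}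

theorem ι_mul_cliffordFinsetProd (hv : Pairwise fun i j => f.IsOrtho (v i) (v j))
    (i : I) (S : Finset I) :
    ι f (v i) * cliffordFinsetProd f v S =
      (-1 : F) ^ (S.erase i).card • (cliffordFinsetProd f v S * ι f (v i)) := by
  rw [cliffordFinsetProd, ι_mul_list_prod_of_pairwise_isOrtho hv, Finset.countP_sort,
    Finset.filter_ne']

theorem cliffordFinsetProd_mul_ι_sub_ι_mul_of_even
    (hv : Pairwise fun i j => f.IsOrtho (v i) (v j)) {S : Finset I} (hS : Even S.card) (i : I) :
    cliffordFinsetProd f v S * ι f (v i) - ι f (v i) * cliffordFinsetProd f v S =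
      if i ∈ S then (2 : F) • (cliffordFinsetProd f v S * ι f (v i)) else 0 := by
  rw [ι_mul_cliffordFinsetProd hv]
  split_ifs with hi
  · have hodd : Odd (S.erase i).card := by
      rw [Finset.card_erase_of_mem hi]
      exact Nat.Even.sub_odd (Finset.card_pos.mpr ⟨i, hi⟩) hS odd_one
    rw [hodd.neg_one_pow, neg_one_smul, sub_neg_eq_add, two_smul]
  · rw [Finset.erase_eq_of_notMem hi, hS.neg_one_pow, one_smul, sub_self]

end OrthogonalBasis

theorem inner_derivations_even_sets_linearly_independent
    (F : Type*) [Field F] (hchar : ringChar F ≠ 2)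
    (V : Type*) [AddCommGroup V] [Module F V]
    (I : Type*) [LinearOrder I]
    (f : QuadraticForm F V) (v : Module.Basis I F V)
    (hnorm : ∀ i, f (v i) = 1)
    (horth : ∀ i j, i ≠ j → QuadraticMap.polar f (v i) (v j) = 0)
    (𝒮 : Finset (Finset I))
    (h𝒮 : ∀ S ∈ 𝒮, S.Nonempty ∧ Even S.card)
    (α : Finset I → F)
    (hzero : ∀ x : CliffordAlgebra f,
      ∑ S ∈ 𝒮, α S • (cliffordFinsetProd f (⇑v) S * x - x * cliffordFinsetProd f (⇑v) S) = 0) :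
    ∀ S ∈ 𝒮, α S = 0 := by
  have h2 : (2 : F) ≠ 0 := Ring.two_ne_zero hchar
  have : Invertible (2 : F) := invertibleOfNonzero h2
  have hv : Pairwise fun i j => f.IsOrtho (v i) (v j) := fun i j hij =>
    QuadraticMap.isOrtho_polarBilin.mp (horth i j hij)
  intro S₀ hS₀
  obtain ⟨⟨i, hi⟩, -⟩ := h𝒮 S₀ hS₀
  have hsum : ∑ S ∈ 𝒮, (if i ∈ S then 2 * α S else 0) • cliffordFinsetProd f v S = 0 := by
    have h := congrArg (· * ι f (v i)) (hzero (ι f (v i)))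
    simp only [Finset.sum_mul, smul_mul_assoc, zero_mul] at h
    rw [← h]
    refine Finset.sum_congr rfl fun S hS => ?_
    rw [cliffordFinsetProd_mul_ι_sub_ι_mul_of_even hv (h𝒮 S hS).2]
    split_ifs
    · rw [smul_mul_assoc, mul_assoc, ι_sq_scalar, hnorm, map_one, mul_one, smul_smul,
        mul_comm (α S)]
    · rw [zero_smul, zero_mul, smul_zero]
  have hcoeff := linearIndependent_iff'.mp (linearIndependent_cliffordFinsetProd v hv) 𝒮 _ hsum
    S₀ hS₀
  rw [if_pos hi] at hcoeff
  exact (mul_eq_zero.mp hcoeff).resolve_left h2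
end

section
/- Let A be a unital algebra over a field F such that every finite subset of A lies in a unital subalgebra isomorphic to a matrix algebra Mₙ(F), and suppose char F is coprime to all n for which A contains a unital subalgebra isomorphic to Mₙ(F). Then there exists a unique linear functional tr : A → F with tr(ab) = tr(ba) for all a,b ∈ A and tr(1) = 1. -/
/-! On `Mₙ(F)` a linear functional `f` vanishing on commutators kills the off-diagonal matrix
units and takes one common value on the diagonal ones, so `n • f = f 1 • trace`. When `n` is
invertible in `F`, the normalized trace `n⁻¹ • trace` is therefore the only such functional with
`f 1 = 1`, and it is compatible with unital embeddings of matrix algebras. Any two matrix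
subalgebras of `A` are finite-dimensional, hence lie in a common third one, so their normalized
traces agree on their intersection and glue to a trace on `A`; uniqueness on each matrix
subalgebra gives uniqueness on `A`. -/

open Matrix

namespace Matrix

variable {n R : Type*} [Fintype n] [DecidableEq n] [CommRing R]

theorem map_single_of_ne_of_map_mul_comm (f : Matrix n n R →ₗ[R] R)
    (hf : ∀ x y, f (x * y) = f (y * x)) {i j : n} (hij : i ≠ j) :
    f (single i j 1) = 0 := by
  simpa [hij.symm] using hf (single i i 1) (single i j 1)

theorem map_single_diag_of_map_mul_comm (f : Matrix n n R →ₗ[R] R)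
    (hf : ∀ x y, f (x * y) = f (y * x)) (i j : n) :
    f (single i i 1) = f (single j j 1) := by
  simpa using hf (single i j 1) (single j i 1)

theorem card_smul_eq_smul_traceLinearMap (f : Matrix n n R →ₗ[R] R)
    (hf : ∀ x y, f (x * y) = f (y * x)) :
    (Fintype.card n : R) • f = f 1 • traceLinearMap n R R := by
  refine ext_linearMap R fun i j => LinearMap.ext_ring ?_
  simp only [LinearMap.comp_apply, singleLinearMap_apply, LinearMap.smul_apply,
    traceLinearMap_apply, smul_eq_mul]
  obtain rfl | hij := eq_or_ne i j
  · have hone : f 1 = Fintype.card n * f (single i i 1) := by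
      simp [← sum_single_one, map_sum, map_single_diag_of_map_mul_comm f hf _ i]
    rw [hone, trace_single_eq_same, mul_one]
  · rw [map_single_of_ne_of_map_mul_comm f hf hij, trace_single_eq_of_ne _ _ _ hij, mul_zero,
      mul_zero]

end Matrix

section NormalizedTrace

variable {F B C n : Type*} [Field F] [Ring B] [Algebra F B] [Ring C] [Algebra F C]
  [Fintype n] [DecidableEq n]

noncomputable def normalizedTrace (e : B ≃ₐ[F] Matrix n n F) : B →ₗ[F] F :=
  (Fintype.card n : F)⁻¹ • (traceLinearMap n F F ∘ₗ e.toLinearMap)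

theorem normalizedTrace_apply (e : B ≃ₐ[F] Matrix n n F) (b : B) :
    normalizedTrace e b = (Fintype.card n : F)⁻¹ * (e b).trace :=
  rfl

theorem normalizedTrace_mul_comm (e : B ≃ₐ[F] Matrix n n F) (x y : B) :
    normalizedTrace e (x * y) = normalizedTrace e (y * x) := by
  rw [normalizedTrace_apply, normalizedTrace_apply, map_mul, map_mul, trace_mul_comm]

theorem normalizedTrace_one (e : B ≃ₐ[F] Matrix n n F) (hn : (Fintype.card n : F) ≠ 0) :
    normalizedTrace e 1 = 1 := by
  simp [normalizedTrace_apply, hn]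

theorem comp_algHom_eq_smul_normalizedTrace (e : B ≃ₐ[F] Matrix n n F)
    (hn : (Fintype.card n : F) ≠ 0) (f : C →ₗ[F] F) (hf : ∀ x y, f (x * y) = f (y * x))
    (φ : B →ₐ[F] C) :
    f ∘ₗ φ.toLinearMap = f 1 • normalizedTrace e := by
  have key := card_smul_eq_smul_traceLinearMap (f ∘ₗ (φ.comp e.symm.toAlgHom).toLinearMap)
    (fun x y => by simpa using hf _ _)
  ext b
  have hb : (Fintype.card n : F) * f (φ b) = f 1 * (e b).trace := by
    simpa using congr($key (e b))
  rw [LinearMap.comp_apply, AlgHom.toLinearMap_apply, LinearMap.smul_apply, smul_eq_mul,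
    normalizedTrace_apply, ← mul_assoc, mul_comm (f 1), mul_assoc, ← hb, inv_mul_cancel_left₀ hn]

end NormalizedTrace

theorem Subalgebra.fg_of_moduleFinite {R A : Type*} [CommSemiring R] [Semiring A] [Algebra R A]
    (S : Subalgebra R A) [Module.Finite R S] : S.FG :=
  Subalgebra.fg_of_fg_toSubmodule (Module.Finite.iff_fg.1 ‹_›)

section LocallyMatrix

variable {F A : Type*} [Field F] [Ring A] [Algebra F A]

theorem normalizedTrace_inclusion {ι κ : Type*} [Fintype ι] [DecidableEq ι] [Fintype κ]
    [DecidableEq κ] {B C : Subalgebra F A} (h : B ≤ C) (eB : B ≃ₐ[F] Matrix ι ι F)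
    (eC : C ≃ₐ[F] Matrix κ κ F) (hι : (Fintype.card ι : F) ≠ 0)
    (hκ : (Fintype.card κ : F) ≠ 0) (b : B) :
    normalizedTrace eC (Subalgebra.inclusion h b) = normalizedTrace eB b := by
  simpa [normalizedTrace_one eC hκ] using congr($(comp_algHom_eq_smul_normalizedTrace eB hι
    (normalizedTrace eC) (normalizedTrace_mul_comm eC) (Subalgebra.inclusion h)) b)

variable (hloc : ∀ s : Finset A, ∃ (n : ℕ) (B : Subalgebra F A), (n : F) ≠ 0 ∧ (↑s : Set A) ⊆ B ∧
    Nonempty (B ≃ₐ[F] Matrix (Fin n) (Fin n) F))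
include hloc

theorem exists_matrix_subalgebra_le {S : Subalgebra F A} (hS : S.FG) :
    ∃ (n : ℕ) (B : Subalgebra F A), (n : F) ≠ 0 ∧ S ≤ B ∧
      Nonempty (B ≃ₐ[F] Matrix (Fin n) (Fin n) F) := by
  obtain ⟨s, rfl⟩ := hS
  obtain ⟨n, B, hn, hsB, hB⟩ := hloc s
  exact ⟨n, B, hn, Algebra.adjoin_le hsB, hB⟩

theorem normalizedTrace_eq_of_mem {ι κ : Type*} [Fintype ι] [DecidableEq ι] [Fintype κ]
    [DecidableEq κ] {B C : Subalgebra F A} (eB : B ≃ₐ[F] Matrix ι ι F)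
    (eC : C ≃ₐ[F] Matrix κ κ F) (hι : (Fintype.card ι : F) ≠ 0) (hκ : (Fintype.card κ : F) ≠ 0)
    {a : A} (haB : a ∈ B) (haC : a ∈ C) :
    normalizedTrace eB ⟨a, haB⟩ = normalizedTrace eC ⟨a, haC⟩ := by
  have : Module.Finite F B := .equiv eB.symm.toLinearEquiv
  have : Module.Finite F C := .equiv eC.symm.toLinearEquiv
  obtain ⟨n, D, hn, hD, ⟨eD⟩⟩ :=
    exists_matrix_subalgebra_le hloc (B.fg_of_moduleFinite.sup C.fg_of_moduleFinite)
  have hD' : (Fintype.card (Fin n) : F) ≠ 0 := by simpa using hn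
  rw [← normalizedTrace_inclusion (le_sup_left.trans hD) eB eD hι hD',
    ← normalizedTrace_inclusion (le_sup_right.trans hD) eC eD hκ hD']
  rfl

theorem linearMap_eq_of_map_mul_comm {f g : A →ₗ[F] F} (hf : ∀ a b, f (a * b) = f (b * a))
    (hf1 : f 1 = 1) (hg : ∀ a b, g (a * b) = g (b * a)) (hg1 : g 1 = 1) : f = g := by
  ext a
  obtain ⟨n, B, hn, haB, ⟨e⟩⟩ := hloc {a}
  have ha : a ∈ B := haB (Finset.mem_singleton_self a)
  have hn' : (Fintype.card (Fin n) : F) ≠ 0 := by simpa using hn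
  have restrict {h : A →ₗ[F] F} (hh : ∀ a b, h (a * b) = h (b * a)) (hh1 : h 1 = 1) :
      h a = normalizedTrace e ⟨a, ha⟩ := by
    simpa [hh1] using congr($(comp_algHom_eq_smul_normalizedTrace e hn' h hh B.val) ⟨a, ha⟩)
  rw [restrict hf hf1, restrict hg hg1]

theorem exists_linearMap_map_mul_comm_map_one :
    ∃ tr : A →ₗ[F] F, (∀ a b, tr (a * b) = tr (b * a)) ∧ tr 1 = 1 := by
  classical
  choose n B hn hsub e using id hloc
  replace hn (s : Finset A) : (Fintype.card (Fin (n s)) : F) ≠ 0 := by simpa using hn s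
  let τ (a : A) : F := normalizedTrace (e {a}).some ⟨a, hsub {a} (Finset.mem_singleton_self a)⟩
  have hτ (s : Finset A) (a : A) (ha : a ∈ B s) : τ a = normalizedTrace (e s).some ⟨a, ha⟩ :=
    normalizedTrace_eq_of_mem hloc _ _ (hn _) (hn _) _ _
  have mem_pair (a b : A) : a ∈ B {a, b} ∧ b ∈ B {a, b} :=
    ⟨hsub _ (by simp), hsub _ (by simp)⟩
  refine ⟨{ toFun := τ, map_add' := fun a b => ?_, map_smul' := fun c a => ?_ },
    fun a b => ?_, ?_⟩
  · obtain ⟨ha, hb⟩ := mem_pair a b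
    rw [hτ _ _ ha, hτ _ _ hb, hτ _ _ (add_mem ha hb)]
    exact map_add (normalizedTrace (e {a, b}).some) ⟨a, ha⟩ ⟨b, hb⟩
  · have ha : a ∈ B {a} := hsub _ (Finset.mem_singleton_self a)
    rw [hτ _ _ ha, hτ _ _ (Subalgebra.smul_mem _ ha c)]
    exact map_smul (normalizedTrace (e {a}).some) c ⟨a, ha⟩
  · obtain ⟨ha, hb⟩ := mem_pair a b
    change τ _ = τ _
    rw [hτ _ _ (mul_mem ha hb), hτ _ _ (mul_mem hb ha)]
    exact normalizedTrace_mul_comm (e {a, b}).some ⟨a, ha⟩ ⟨b, hb⟩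
  · change τ 1 = 1
    rw [hτ ∅ 1 (one_mem _)]
    exact normalizedTrace_one _ (hn ∅)

end LocallyMatrix

theorem locally_matrix_algebra_unique_trace
    (F : Type*) [Field F]
    (A : Type*) [Ring A] [Algebra F A]
    (hloc : ∀ s : Finset A, ∃ (n : ℕ) (B : Subalgebra F A), 0 < n ∧ (↑s : Set A) ⊆ B ∧
      Nonempty (B ≃ₐ[F] Matrix (Fin n) (Fin n) F))
    (hcop : ∀ n : ℕ, 0 < n → (∃ B : Subalgebra F A,
        Nonempty (B ≃ₐ[F] Matrix (Fin n) (Fin n) F)) →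
      ¬ ((ringChar F : ℕ) ∣ n)) :
    ∃! tr : A →ₗ[F] F,
      (∀ a b : A, tr (a * b) = tr (b * a)) ∧ tr 1 = 1 := by
  replace hloc (s : Finset A) : ∃ (n : ℕ) (B : Subalgebra F A), (n : F) ≠ 0 ∧ (↑s : Set A) ⊆ B ∧
      Nonempty (B ≃ₐ[F] Matrix (Fin n) (Fin n) F) := by
    obtain ⟨n, B, hn, hsB, hB⟩ := hloc s
    exact ⟨n, B, fun h0 => hcop n hn ⟨B, hB⟩ ((CharP.cast_eq_zero_iff F _ n).1 h0), hsB, hB⟩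
  obtain ⟨tr, htr, htr1⟩ := exists_linearMap_map_mul_comm_map_one hloc
  exact ⟨tr, ⟨htr, htr1⟩, fun f ⟨hf, hf1⟩ => linearMap_eq_of_map_mul_comm hloc hf hf1 htr htr1⟩
end
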